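/- arXiv:2010.08967 — 3 statements merged into one kernel-verified Lean document; each statement's English description precedes it below -/
import Mathlib

section
/- Let f(q) = -1 + \sum_{n\ge 1} a(n) q^n be a formal power series with all a(n) > 0. If a(1) > k and a(n) > k for all n \ge 2, then every coefficient of q^n for n \ge 1 in the series f(q) / \prod_{m=1}^{\infty}(1 - q^m)^k is positive. -/
/-!
Write `P = ∏_{m ≤ n} (1 - qᵐ)^{-k}` and compare power series coefficientwise (`≼`). From
`(1 - qᵐ)⁻¹ = 1 + qᵐ (1 - qᵐ)⁻¹` one gets, for `ψ ≥ 0`, that `(1 - qᵐ)^{-k} ψ ≤ ψ + k qᵐ (1 - qᵐ)^{-k} ψ`,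
and multiplying these over `m` gives `P ≤ 1 + k (q + ⋯ + qⁿ) P`. Since `f ≥ -1 + k (q + ⋯ + qⁿ) + (a n - k) qⁿ`
and `P ≥ 1`, the coefficient of `qⁿ` in `f P` is at least `a n - k > 0`.
-/

open PowerSeries Finset

namespace PowerSeries

section CoeffLE

variable {R : Type*} [Semiring R]

def CoeffLE [Preorder R] (φ ψ : R⟦X⟧) : Prop := ∀ n, coeff n φ ≤ coeff n ψ

infix:50 " ≼ " => CoeffLE

namespace CoeffLE

variable {φ ψ χ φ' ψ' : R⟦X⟧}

theorem refl [Preorder R] (φ : R⟦X⟧) : φ ≼ φ := fun _ => le_rfl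

theorem trans [Preorder R] (h : φ ≼ ψ) (h' : ψ ≼ χ) : φ ≼ χ := fun n => (h n).trans (h' n)

variable [PartialOrder R] [IsOrderedRing R]

theorem add (h : φ ≼ ψ) (h' : φ' ≼ ψ') : φ + φ' ≼ ψ + ψ' := fun n => by
  simpa only [map_add] using add_le_add (h n) (h' n)

theorem mul_left (hχ : 0 ≼ χ) (h : φ ≼ ψ) : χ * φ ≼ χ * ψ := fun n => by
  simp only [coeff_mul]
  exact sum_le_sum fun p _ => mul_le_mul_of_nonneg_left (h p.2) (by simpa using hχ p.1)

theorem mul_nonneg (hφ : 0 ≼ φ) (hψ : 0 ≼ ψ) : 0 ≼ φ * ψ := by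
  simpa using hφ.mul_left hψ

theorem le_add_of_nonneg_right (hψ : 0 ≼ ψ) : φ ≼ φ + ψ := by
  simpa using (refl φ).add hψ

end CoeffLE

instance [Preorder R] : @Trans R⟦X⟧ R⟦X⟧ R⟦X⟧ CoeffLE CoeffLE CoeffLE := ⟨CoeffLE.trans⟩

variable [PartialOrder R] [IsOrderedRing R]

theorem coeffLE_zero_X_pow (m : ℕ) : (0 : R⟦X⟧) ≼ X ^ m := fun n => by
  rw [coeff_X_pow, map_zero]
  split_ifs <;> simp

theorem coeffLE_zero_one : (0 : R⟦X⟧) ≼ 1 := by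
  simpa using coeffLE_zero_X_pow (R := R) 0

theorem coeffLE_zero_natCast (k : ℕ) : (0 : R⟦X⟧) ≼ k := fun n => by
  rw [← map_natCast (C (R := R)), coeff_C, map_zero]
  split_ifs <;> simp

theorem coeffLE_zero_sum_X_pow (s : Finset ℕ) : (0 : R⟦X⟧) ≼ ∑ m ∈ s, X ^ m := fun n => by
  simpa only [map_sum, map_zero] using sum_nonneg fun m _ => coeffLE_zero_X_pow (R := R) m n

end CoeffLE

section Geometric

variable {K : Type*} [Field K] [PartialOrder K] [IsOrderedRing K] {m : ℕ}

theorem inv_one_sub_X_pow_eq (hm : m ≠ 0) :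
    (1 - X ^ m : K⟦X⟧)⁻¹ = 1 + X ^ m * (1 - X ^ m)⁻¹ := by
  have h : (1 - X ^ m : K⟦X⟧) * (1 - X ^ m)⁻¹ = 1 :=
    PowerSeries.mul_inv_cancel _ (by simp [zero_pow hm])
  linear_combination h

theorem coeffLE_zero_inv_one_sub_X_pow (hm : m ≠ 0) : (0 : K⟦X⟧) ≼ (1 - X ^ m)⁻¹ := by
  intro n
  induction n using Nat.strong_induction_on with
  | _ n ih =>
    rw [inv_one_sub_X_pow_eq hm, map_add, coeff_X_pow_mul', coeff_one, map_zero]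
    have hrest : (0 : K) ≤ if m ≤ n then coeff (n - m) (1 - X ^ m : K⟦X⟧)⁻¹ else 0 := by
      split_ifs
      · simpa using ih (n - m) (by omega)
      · exact le_rfl
    exact add_nonneg (by split_ifs <;> simp) hrest

variable {ψ : K⟦X⟧}

theorem self_coeffLE_inv_one_sub_X_pow_mul (hm : m ≠ 0) (hψ : 0 ≼ ψ) :
    ψ ≼ (1 - X ^ m)⁻¹ * ψ := by
  rw [inv_one_sub_X_pow_eq hm, add_mul, one_mul, mul_assoc]
  exact CoeffLE.le_add_of_nonneg_right <| (coeffLE_zero_X_pow m).mul_nonneg <|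
    (coeffLE_zero_inv_one_sub_X_pow hm).mul_nonneg hψ

theorem self_coeffLE_inv_one_sub_X_pow_pow_mul (hm : m ≠ 0) (hψ : 0 ≼ ψ) (k : ℕ) :
    ψ ≼ (1 - X ^ m)⁻¹ ^ k * ψ := by
  induction k with
  | zero => simpa using CoeffLE.refl ψ
  | succ k ih =>
    rw [pow_succ', mul_assoc]
    exact ih.trans (self_coeffLE_inv_one_sub_X_pow_mul hm ((hψ.trans ih)))

theorem inv_one_sub_X_pow_pow_mul_coeffLE (hm : m ≠ 0) (hψ : 0 ≼ ψ) (k : ℕ) :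
    (1 - X ^ m)⁻¹ ^ k * ψ ≼ ψ + (k : K⟦X⟧) * X ^ m * ((1 - X ^ m)⁻¹ ^ k * ψ) := by
  have hB := inv_one_sub_X_pow_eq (K := K) hm
  induction k with
  | zero => simpa using CoeffLE.refl ψ
  | succ k ih =>
    set B : K⟦X⟧ := (1 - X ^ m)⁻¹
    have hmono : B ^ k * ψ ≼ B ^ (k + 1) * ψ := by
      rw [pow_succ', mul_assoc]
      exact self_coeffLE_inv_one_sub_X_pow_mul hm (hψ.trans (self_coeffLE_inv_one_sub_X_pow_pow_mul hm hψ k))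
    have hstep : B ^ (k + 1) * ψ = B ^ k * ψ + X ^ m * (B ^ (k + 1) * ψ) := by
      linear_combination (B ^ k * ψ) * hB
    have hkX : (0 : K⟦X⟧) ≼ (k : K⟦X⟧) * X ^ m :=
      (coeffLE_zero_natCast k).mul_nonneg (coeffLE_zero_X_pow m)
    calc B ^ (k + 1) * ψ = B ^ k * ψ + X ^ m * (B ^ (k + 1) * ψ) := hstep
      _ ≼ ψ + (k : K⟦X⟧) * X ^ m * (B ^ k * ψ) + X ^ m * (B ^ (k + 1) * ψ) :=
          ih.add (CoeffLE.refl _)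
      _ ≼ ψ + (k : K⟦X⟧) * X ^ m * (B ^ (k + 1) * ψ) + X ^ m * (B ^ (k + 1) * ψ) :=
          ((CoeffLE.refl ψ).add (hkX.mul_left hmono)).add (CoeffLE.refl _)
      _ = ψ + ((k + 1 : ℕ) : K⟦X⟧) * X ^ m * (B ^ (k + 1) * ψ) := by push_cast; ring

variable {s : Finset ℕ}

theorem one_coeffLE_prod_inv_one_sub_X_pow_pow (hs : ∀ m ∈ s, m ≠ 0) (k : ℕ) :
    1 ≼ ∏ m ∈ s, (1 - X ^ m : K⟦X⟧)⁻¹ ^ k := by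
  induction s using Finset.induction_on with
  | empty => simpa using CoeffLE.refl (1 : K⟦X⟧)
  | insert a s ha ih =>
    have hP := ih fun m hm => hs m (mem_insert_of_mem hm)
    rw [prod_insert ha]
    exact hP.trans <| self_coeffLE_inv_one_sub_X_pow_pow_mul (hs a (mem_insert_self a s))
      (coeffLE_zero_one.trans hP) k

theorem prod_inv_one_sub_X_pow_pow_coeffLE (hs : ∀ m ∈ s, m ≠ 0) (k : ℕ) :
    ∏ m ∈ s, (1 - X ^ m : K⟦X⟧)⁻¹ ^ k ≼
      1 + (k : K⟦X⟧) * (∑ m ∈ s, X ^ m) * ∏ m ∈ s, (1 - X ^ m)⁻¹ ^ k := by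
  induction s using Finset.induction_on with
  | empty => simpa using CoeffLE.refl (1 : K⟦X⟧)
  | insert a s ha ih =>
    have hs' : ∀ m ∈ s, m ≠ 0 := fun m hm => hs m (mem_insert_of_mem hm)
    have ha0 : a ≠ 0 := hs a (mem_insert_self a s)
    set P := ∏ m ∈ s, (1 - X ^ m : K⟦X⟧)⁻¹ ^ k
    set B : K⟦X⟧ := (1 - X ^ a)⁻¹
    have hP : 0 ≼ P := coeffLE_zero_one.trans (one_coeffLE_prod_inv_one_sub_X_pow_pow hs' k)
    have hmono : P ≼ B ^ k * P := self_coeffLE_inv_one_sub_X_pow_pow_mul ha0 hP k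
    have hkS : (0 : K⟦X⟧) ≼ (k : K⟦X⟧) * ∑ m ∈ s, X ^ m :=
      (coeffLE_zero_natCast k).mul_nonneg (coeffLE_zero_sum_X_pow s)
    rw [prod_insert ha, sum_insert ha]
    calc B ^ k * P ≼ P + (k : K⟦X⟧) * X ^ a * (B ^ k * P) :=
          inv_one_sub_X_pow_pow_mul_coeffLE ha0 hP k
      _ ≼ 1 + (k : K⟦X⟧) * (∑ m ∈ s, X ^ m) * P + (k : K⟦X⟧) * X ^ a * (B ^ k * P) :=
          (ih hs').add (CoeffLE.refl _)
      _ ≼ 1 + (k : K⟦X⟧) * (∑ m ∈ s, X ^ m) * (B ^ k * P) + (k : K⟦X⟧) * X ^ a * (B ^ k * P) :=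
          ((CoeffLE.refl 1).add (hkS.mul_left hmono)).add (CoeffLE.refl _)
      _ = 1 + (k : K⟦X⟧) * (X ^ a + ∑ m ∈ s, X ^ m) * (B ^ k * P) := by ring

end Geometric

theorem coeff_mul_pos_of_coeffLE {K : Type*} [Field K] [LinearOrder K] [IsStrictOrderedRing K]
    {f P G : K⟦X⟧} {n : ℕ} {c : K} (hn : n ≠ 0) (hc : 0 < c) (hP1 : 1 ≼ P)
    (hPG : P ≼ 1 + G * P) (hf : -1 + G + C c * X ^ n ≼ f) : 0 < coeff n (f * P) := by
  have hfP : (-1 + G + C c * X ^ n) * P ≼ f * P := by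
    simpa only [mul_comm P] using (coeffLE_zero_one.trans hP1).mul_left hf
  have hPn := hPG n
  rw [map_add, coeff_one, if_neg hn, zero_add] at hPn
  have hP0 : 1 ≤ coeff 0 P := by simpa using hP1 0
  calc 0 < c := hc
    _ ≤ c * coeff 0 P := le_mul_of_one_le_right hc.le hP0
    _ ≤ coeff n ((-1 + G + C c * X ^ n) * P) := by
        rw [add_mul, add_mul, map_add, map_add, mul_assoc (C _), coeff_C_mul, coeff_X_pow_mul',
          if_pos le_rfl, Nat.sub_self, neg_one_mul, map_neg]
        linarith
    _ ≤ coeff n (f * P) := hfP n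

end PowerSeries


theorem stmt_0_general (k : ℕ) (a : ℕ → ℚ)
    (h1 : (k : ℚ) < a 1)
    (h2 : ∀ n, 2 ≤ n → (k : ℚ) < a n) :
    ∀ n, 1 ≤ n →
      0 < PowerSeries.coeff (R := ℚ) n
        ((PowerSeries.mk fun m => if m = 0 then (-1 : ℚ) else a m) *
          ∏ m ∈ Finset.Icc 1 n, ((1 - (PowerSeries.X : PowerSeries ℚ) ^ m)⁻¹) ^ k) := by
  intro n hn
  set f : ℚ⟦X⟧ := PowerSeries.mk fun m => if m = 0 then (-1 : ℚ) else a m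
  set P : ℚ⟦X⟧ := ∏ m ∈ Icc 1 n, (1 - X ^ m)⁻¹ ^ k
  set G : ℚ⟦X⟧ := (k : ℚ⟦X⟧) * ∑ m ∈ Icc 1 n, X ^ m
  have hk : ∀ j, 1 ≤ j → (k : ℚ) < a j := fun j hj => by
    rcases hj.eq_or_lt with rfl | hj
    exacts [h1, h2 j hj]
  have hIcc : ∀ m ∈ Icc 1 n, m ≠ 0 := fun m hm => Nat.one_le_iff_ne_zero.mp (mem_Icc.mp hm).1
  have hP1 : (1 : ℚ⟦X⟧) ≼ P := one_coeffLE_prod_inv_one_sub_X_pow_pow hIcc k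
  have hPG : P ≼ 1 + G * P := prod_inv_one_sub_X_pow_pow_coeffLE hIcc k
  have hf : -1 + G + C (a n - k) * X ^ n ≼ f := fun j => by
    have hkC : (k : ℚ⟦X⟧) = C (k : ℚ) := (map_natCast C k).symm
    simp only [G, f, hkC, map_add, map_neg, coeff_one, coeff_C_mul, coeff_mk,
      map_sum, coeff_X_pow, sum_ite_eq, mem_Icc]
    obtain rfl | hj := j.eq_zero_or_pos
    · simp [show 0 ≠ n by omega]
    · have hkj := hk j hj
      have hk0 : (0 : ℚ) ≤ k := k.cast_nonneg
      split_ifs <;> subst_vars <;> linarith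
  exact coeff_mul_pos_of_coeffLE (by omega) (sub_pos.2 (hk n hn)) hP1 hPG hf

/-- If `f(q) = -1 + ∑_{n≥1} a n qⁿ` with all `a n > 0`, `a 1 > k` and
`a n > k` for `n ≥ 2`, then every coefficient of `qⁿ` for `n ≥ 1` in
`f(q) / ∏_{m=1}^∞ (1 - qᵐ)^k` is positive.  (The coefficient of `qⁿ` of the infinite
product only depends on the factors with `m ≤ n`, so the product is truncated at `n`.) -/
theorem stmt_0 (k : ℕ) (hk : 0 < k) (a : ℕ → ℚ)
    (ha : ∀ n, 1 ≤ n → 0 < a n)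
    (h1 : (k : ℚ) < a 1)
    (h2 : ∀ n, 2 ≤ n → (k : ℚ) < a n) :
    ∀ n, 1 ≤ n →
      0 < PowerSeries.coeff (R := ℚ) n
        ((PowerSeries.mk fun m => if m = 0 then (-1 : ℚ) else a m) *
          ∏ m ∈ Finset.Icc 1 n, ((1 - (PowerSeries.X : PowerSeries ℚ) ^ m)⁻¹) ^ k) :=
  stmt_0_general k a h1 h2
end

section
/- Every coefficient of the q-expansion of \theta_3(2\tau)/\eta(\tau)^6 is positive, where \theta_3(2\tau) = \sum_{n\in\mathbb{Z}} q^{n^2} and \eta(\tau)^6 = q^{1/4}\prod_{m\ge 1}(1-q^m)^6. -/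
/-!
Every factor has nonnegative coefficients: `θ₃` visibly, and `(1 - q^m)⁻¹ = ∑ₖ q^{mk}`. For such
series each coefficient `[q^{i+j}] f g` dominates `[q^i] f · [q^j] g`. The constant term of `θ₃` is
`1`, every factor `(1 - q^m)⁻¹` has constant term `1`, and `[q^n] (1 - q)⁻⁶ = binom(n + 5, 5) > 0`,
so `[q^n]` of the whole product is positive.
-/

open PowerSeries Finset

namespace PowerSeries

variable (R : Type*)

def nonnegCoeffs [CommSemiring R] [PartialOrder R] [IsOrderedRing R] : Subsemiring R⟦X⟧ where
  carrier := {f | ∀ n, 0 ≤ coeff n f}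
  zero_mem' n := by simp
  one_mem' n := by rw [coeff_one]; split_ifs <;> simp
  add_mem' hf hg n := by rw [map_add]; exact add_nonneg (hf n) (hg n)
  mul_mem' hf hg n := by
    rw [coeff_mul]; exact sum_nonneg fun p _ => mul_nonneg (hf p.1) (hg p.2)

/-- `θ₃(2τ) = ∑_{m ∈ ℤ} q^{m²}` as a series in `q = X`, the terms `q^{(±m)²}` being collected. -/
def theta3Series [Semiring R] : R⟦X⟧ :=
  mk fun j => ∑ m ∈ range (j + 1), if j = m ^ 2 then (if m = 0 then 1 else 2) else 0

variable {R}

section Ordered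

variable [CommSemiring R] [PartialOrder R]

theorem mul_coeff_le_coeff_mul [IsOrderedRing R] {f g : R⟦X⟧} (hf : f ∈ nonnegCoeffs R)
    (hg : g ∈ nonnegCoeffs R) (i j : ℕ) : coeff i f * coeff j g ≤ coeff (i + j) (f * g) := by
  rw [coeff_mul]
  exact single_le_sum (f := fun p : ℕ × ℕ => coeff p.1 f * coeff p.2 g)
    (fun p _ => mul_nonneg (hf p.1) (hg p.2)) (a := (i, j)) (mem_antidiagonal.2 rfl)

theorem coeff_mul_pos [IsStrictOrderedRing R] {f g : R⟦X⟧} (hf : f ∈ nonnegCoeffs R)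
    (hg : g ∈ nonnegCoeffs R) {i j : ℕ} (hfi : 0 < coeff i f) (hgj : 0 < coeff j g) :
    0 < coeff (i + j) (f * g) :=
  (mul_pos hfi hgj).trans_le (mul_coeff_le_coeff_mul hf hg i j)

theorem theta3Series_mem_nonnegCoeffs [IsOrderedRing R] : theta3Series R ∈ nonnegCoeffs R :=
  fun j => by
    rw [theta3Series, coeff_mk]
    exact sum_nonneg fun m _ => by split_ifs <;> norm_num

end Ordered

@[simp]
theorem constantCoeff_theta3Series [Semiring R] : constantCoeff (theta3Series R) = 1 := by
  simp [theta3Series, ← coeff_zero_eq_constantCoeff_apply]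

theorem mk_ite_dvd_mul_one_sub_X_pow [CommRing R] {m : ℕ} (hm : m ≠ 0) :
    (mk fun k => if m ∣ k then 1 else 0 : R⟦X⟧) * (1 - X ^ m) = 1 := by
  ext k
  simp only [mul_sub, mul_one, map_sub, coeff_mul_X_pow', coeff_mk, coeff_one]
  rcases Nat.eq_zero_or_pos k with rfl | hk
  · simp [hm]
  by_cases hmk : m ≤ k
  · simp only [hk.ne', hmk, if_true, if_false, ← Nat.dvd_sub_iff_left hmk dvd_rfl, sub_self]
  · simp [hk.ne', hmk, mt (Nat.le_of_dvd hk) hmk]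

section Field

variable [Field R] {m : ℕ}

theorem inv_one_sub_X_pow (hm : m ≠ 0) :
    (1 - X ^ m : R⟦X⟧)⁻¹ = mk fun k => if m ∣ k then 1 else 0 :=
  (inv_eq_iff_mul_eq_one (by simp [hm])).2 (mk_ite_dvd_mul_one_sub_X_pow hm)

theorem constantCoeff_inv_one_sub_X_pow (hm : m ≠ 0) : constantCoeff (1 - X ^ m : R⟦X⟧)⁻¹ = 1 := by
  simp [hm]

theorem constantCoeff_prod_inv_one_sub_X_pow_pow {s : Finset ℕ} (hs : 0 ∉ s) (d : ℕ) :
    constantCoeff (∏ m ∈ s, (1 - X ^ m : R⟦X⟧)⁻¹ ^ d) = 1 := by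
  rw [map_prod]
  exact prod_eq_one fun _ hm => by
    rw [map_pow, constantCoeff_inv_one_sub_X_pow (ne_of_mem_of_not_mem hm hs), one_pow]

theorem coeff_inv_one_sub_X_pow_succ (d n : ℕ) :
    coeff n ((1 - X : R⟦X⟧)⁻¹ ^ (d + 1)) = (d + n).choose d := by
  rw [← pow_one X, inv_one_sub_X_pow one_ne_zero]
  simp only [one_dvd, if_true]
  rw [show (mk fun _ => 1 : R⟦X⟧) = mk 1 from rfl, mk_one_pow_eq_mk_choose_add, coeff_mk]

theorem inv_one_sub_X_pow_mem_nonnegCoeffs [PartialOrder R] [IsOrderedRing R] (hm : m ≠ 0) :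
    (1 - X ^ m : R⟦X⟧)⁻¹ ∈ nonnegCoeffs R := fun k => by
  rw [inv_one_sub_X_pow hm, coeff_mk]
  split_ifs <;> simp

theorem prod_inv_one_sub_X_pow_pow_mem_nonnegCoeffs [PartialOrder R] [IsOrderedRing R]
    {s : Finset ℕ} (hs : 0 ∉ s) (d : ℕ) :
    ∏ m ∈ s, (1 - X ^ m : R⟦X⟧)⁻¹ ^ d ∈ nonnegCoeffs R :=
  prod_mem fun _ hm => pow_mem (inv_one_sub_X_pow_mem_nonnegCoeffs (ne_of_mem_of_not_mem hm hs)) d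

theorem coeff_prod_Icc_inv_one_sub_X_pow_pow_pos [PartialOrder R] [IsStrictOrderedRing R]
    (n d : ℕ) : 0 < coeff n (∏ m ∈ Icc 1 n, (1 - X ^ m : R⟦X⟧)⁻¹ ^ (d + 1)) := by
  rcases Nat.eq_zero_or_pos n with rfl | hn
  · simp
  have h0 : 0 ∉ (Icc 1 n).erase 1 := fun h => by simp at h
  have hfirst : 0 < coeff n ((1 - X ^ 1 : R⟦X⟧)⁻¹ ^ (d + 1)) := by
    rw [pow_one, coeff_inv_one_sub_X_pow_succ]
    exact_mod_cast Nat.choose_pos (by omega)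
  have hrest : 0 < coeff 0 (∏ m ∈ (Icc 1 n).erase 1, (1 - X ^ m : R⟦X⟧)⁻¹ ^ (d + 1)) := by
    rw [coeff_zero_eq_constantCoeff_apply, constantCoeff_prod_inv_one_sub_X_pow_pow h0]
    exact one_pos
  rw [← mul_prod_erase _ _ (mem_Icc.2 ⟨le_rfl, hn⟩)]
  simpa using coeff_mul_pos (pow_mem (inv_one_sub_X_pow_mem_nonnegCoeffs one_ne_zero) _)
    (prod_inv_one_sub_X_pow_pow_mem_nonnegCoeffs h0 _) hfirst hrest

end Field

end PowerSeries

/-- Every coefficient of the q-expansion of `θ₃(2τ)/η(τ)⁶` is positive.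
Up to the overall factor `q^{-1/4}`, this quotient equals
`(1 + 2∑_{m≥1} q^{m²}) · ∏_{m≥1}(1-qᵐ)^{-6}` as a series in integer powers of `q`;
the claim is that all of its coefficients are positive. -/
theorem stmt_8 :
    ∀ n : ℕ,
      0 < PowerSeries.coeff (R := ℚ) n
        ((PowerSeries.mk fun j =>
            ∑ m ∈ Finset.range (j + 1),
              if j = m ^ 2 then (if m = 0 then (1 : ℚ) else 2) else 0) *
          ∏ m ∈ Finset.Icc 1 n, ((1 - (PowerSeries.X : PowerSeries ℚ) ^ m)⁻¹) ^ 6) := by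
  intro n
  change 0 < coeff n (theta3Series ℚ * _)
  simpa using coeff_mul_pos theta3Series_mem_nonnegCoeffs
    (prod_inv_one_sub_X_pow_pow_mem_nonnegCoeffs (by simp) 6) (i := 0)
    (by simp [coeff_zero_eq_constantCoeff_apply]) (coeff_prod_Icc_inv_one_sub_X_pow_pow_pos n 5)
end

section
/- Suppose h(q) = \sum_{n\ge 0} c(n) q^n satisfies c(0) = -1 and c(n) > 4 for all n \ge 1. Then all coefficients of q^n for n \ge 1 in h(q)/\prod_{m\ge1}(1-q^m)^4 are positive. -/
open PowerSeries Finset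

/-!
Order power series coefficientwise, so that `R⟦X⟧` becomes an ordered ring. Each factor
`S = (1 - X^m)⁻¹` satisfies `S = 1 + X^m S`, hence `S ≥ 1` and
`S^k - 1 = X^m (S + ⋯ + S^k) ≤ k X^m S^k`. Multiplying over the factors gives
`F - 1 ≤ k (∑_{m ≤ n} X^m) F` for `F = ∏_{m ≤ n} (1 - X^m)^{-k}`, i.e. `p n ≤ k ∑_{1 ≤ m ≤ n} p (n - m)`
for the coefficients `p` of `F`. Since `c m > k` and `p 0 = 1`, the coefficient
`-p n + ∑_{1 ≤ m ≤ n} c m p (n - m)` of `X^n` in `mk c * F` is positive.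
-/

theorem pow_sub_one_le_nsmul_mul_pow {A : Type*} [CommRing A] [PartialOrder A] [IsOrderedRing A]
    {s x : A} (hs : 1 ≤ s) (hx : 0 ≤ x) (h : s = 1 + x * s) (k : ℕ) :
    s ^ k - 1 ≤ k • (x * s ^ k) :=
  calc s ^ k - 1 = ∑ i ∈ range k, x * s ^ (i + 1) := by
        rw [← geom_sum_mul, sub_eq_iff_eq_add'.2 h, sum_mul]
        exact sum_congr rfl fun i _ => by ring
    _ ≤ ∑ i ∈ range k, x * s ^ k :=
        sum_le_sum fun i hi => mul_le_mul_of_nonneg_left (pow_le_pow_right₀ hs (mem_range.1 hi)) hx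
    _ = k • (x * s ^ k) := by rw [sum_const, card_range]

namespace PowerSeries

section CoeffwiseOrder

local instance {R : Type*} [Ring R] [PartialOrder R] : PartialOrder R⟦X⟧ where
  le f g := ∀ n, coeff n f ≤ coeff n g
  le_refl _ _ := le_rfl
  le_trans _ _ _ hfg hgh n := (hfg n).trans (hgh n)
  le_antisymm _ _ hfg hgf := ext fun n => (hfg n).antisymm (hgf n)

local instance {R : Type*} [Ring R] [PartialOrder R] [IsOrderedAddMonoid R] :
    IsOrderedAddMonoid R⟦X⟧ where
  add_le_add_left _ _ h _ n := by simpa only [map_add] using add_le_add_left (h n) _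

local instance {R : Type*} [Ring R] [PartialOrder R] [ZeroLEOneClass R] : ZeroLEOneClass R⟦X⟧ where
  zero_le_one n := by
    rw [map_zero, coeff_one]
    split_ifs <;> simp

local instance {R : Type*} [Ring R] [PartialOrder R] [IsOrderedRing R] : IsOrderedRing R⟦X⟧ :=
  IsOrderedRing.of_mul_nonneg fun f g hf hg n => by
    simpa [coeff_mul] using sum_nonneg fun p _ => mul_nonneg (hf p.1) (hg p.2)

theorem X_nonneg {R : Type*} [Ring R] [PartialOrder R] [ZeroLEOneClass R] : (0 : R⟦X⟧) ≤ X :=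
  fun n => by
    rw [map_zero, coeff_X]
    split_ifs <;> simp

section

variable {K : Type*} [Field K] [PartialOrder K] [IsOrderedRing K] {m : ℕ}

theorem inv_one_sub_X_pow_nonneg (hm : m ≠ 0) : 0 ≤ (1 - X ^ m : K⟦X⟧)⁻¹ := by
  intro n
  induction n using Nat.strong_induction_on with
  | _ n ih =>
    have h1 : coeff n 0 ≤ coeff n (1 : K⟦X⟧) := zero_le_one (α := K⟦X⟧) n
    rw [inv_one_sub_X_pow_eq hm, map_add, coeff_X_pow_mul']
    split_ifs with hmn
    · simpa using add_le_add h1 (ih (n - m) (by omega))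
    · simpa using h1

theorem one_le_inv_one_sub_X_pow (hm : m ≠ 0) : 1 ≤ (1 - X ^ m : K⟦X⟧)⁻¹ := by
  rw [inv_one_sub_X_pow_eq hm]
  exact le_add_of_nonneg_right
    (mul_nonneg (pow_nonneg X_nonneg m) (inv_one_sub_X_pow_nonneg hm))

theorem prod_inv_one_sub_X_pow_sub_one_le {s : Finset ℕ} (hs : 0 ∉ s) (k : ℕ) :
    (∏ m ∈ s, ((1 - X ^ m : K⟦X⟧)⁻¹) ^ k) - 1 ≤
      k • ((∑ m ∈ s, X ^ m) * ∏ m ∈ s, ((1 - X ^ m : K⟦X⟧)⁻¹) ^ k) := by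
  induction s using Finset.induction_on with
  | empty => simp
  | insert a s ha ih =>
    rw [mem_insert, not_or] at hs
    have ha0 : a ≠ 0 := Ne.symm hs.1
    set G := ((1 - X ^ a : K⟦X⟧)⁻¹) ^ k
    set F := ∏ m ∈ s, ((1 - X ^ m : K⟦X⟧)⁻¹) ^ k
    have hG : 0 ≤ G := pow_nonneg (inv_one_sub_X_pow_nonneg ha0) k
    have hF : 1 ≤ F := one_le_prod fun m hm =>
      one_le_pow₀ (one_le_inv_one_sub_X_pow fun h => hs.2 (h ▸ hm))
    have hGF : G - 1 ≤ k • (X ^ a * G * F) := calc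
      G - 1 ≤ k • (X ^ a * G) :=
        pow_sub_one_le_nsmul_mul_pow (one_le_inv_one_sub_X_pow ha0) (pow_nonneg X_nonneg a)
          (inv_one_sub_X_pow_eq ha0) k
      _ ≤ k • (X ^ a * G * F) := nsmul_le_nsmul_right
        (le_mul_of_one_le_right (mul_nonneg (pow_nonneg X_nonneg a) hG) hF) k
    rw [prod_insert ha, sum_insert ha]
    calc G * F - 1 = G * (F - 1) + (G - 1) := by ring
      _ ≤ G * (k • ((∑ m ∈ s, X ^ m) * F)) + k • (X ^ a * G * F) := by
        gcongr
        exact ih hs.2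
      _ = k • ((X ^ a + ∑ m ∈ s, X ^ m) * (G * F)) := by ring

end

theorem coeff_mul_prod_inv_one_sub_X_pow_pos {K : Type*} [Field K] [LinearOrder K]
    [IsStrictOrderedRing K] (c : ℕ → K) (k : ℕ) (h0 : c 0 = -1) (hc : ∀ n, 1 ≤ n → (k : K) < c n)
    (n : ℕ) (hn : 1 ≤ n) :
    0 < coeff n (mk c * ∏ m ∈ Icc 1 n, ((1 - X ^ m : K⟦X⟧)⁻¹) ^ k) := by
  set F := ∏ m ∈ Icc 1 n, ((1 - X ^ m : K⟦X⟧)⁻¹) ^ k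
  have hF : 0 ≤ F := prod_nonneg fun m hm =>
    pow_nonneg (inv_one_sub_X_pow_nonneg (by grind)) k
  have hF0 : coeff 0 F = 1 := by
    rw [coeff_zero_eq_constantCoeff_apply, map_prod]
    exact prod_eq_one fun m hm => by simp [constantCoeff_inv, (by grind : m ≠ 0)]
  have hbound : coeff n F ≤ ∑ m ∈ Icc 1 n, k * coeff (n - m) F := by
    have := prod_inv_one_sub_X_pow_sub_one_le (K := K) (s := Icc 1 n) (by simp) k n
    rw [map_sub, map_nsmul, sum_mul, map_sum, coeff_one, if_neg (by omega), sub_zero, nsmul_eq_mul,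
      mul_sum] at this
    convert this using 3 with m hm
    rw [coeff_X_pow_mul', if_pos (mem_Icc.1 hm).2]
  have hsplit : coeff n (mk c * F) = c 0 * coeff n F + ∑ m ∈ Icc 1 n, c m * coeff (n - m) F := by
    rw [coeff_mul, Nat.sum_antidiagonal_eq_sum_range_succ (fun i j => coeff i (mk c) * coeff j F),
      range_eq_Ico, sum_eq_sum_Ico_succ_bot (by omega), Nat.succ_eq_add_one,
      Ico_add_one_right_eq_Icc]
    simp
  have hlt : ∑ m ∈ Icc 1 n, k * coeff (n - m) F < ∑ m ∈ Icc 1 n, c m * coeff (n - m) F :=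
    sum_lt_sum (fun m hm => mul_le_mul_of_nonneg_right (hc m (mem_Icc.1 hm).1).le (hF _))
      ⟨n, by simp [hn], by simpa [hF0] using hc n hn⟩
  rw [hsplit, h0]
  linarith

end CoeffwiseOrder

end PowerSeries

/-- If `h(q) = ∑_{n≥0} c n qⁿ` with `c 0 = -1` and `c n > 4` for `n ≥ 1`,
then all coefficients of `qⁿ` for `n ≥ 1` in `h(q)/∏_{m≥1}(1-qᵐ)⁴` are positive. -/
theorem stmt_9 (c : ℕ → ℚ) (h0 : c 0 = -1) (hc : ∀ n, 1 ≤ n → 4 < c n) :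
    ∀ n, 1 ≤ n →
      0 < PowerSeries.coeff n
        ((PowerSeries.mk c) *
          ∏ m ∈ Finset.Icc 1 n, ((1 - (PowerSeries.X : PowerSeries ℚ) ^ m)⁻¹) ^ 4) :=
  coeff_mul_prod_inv_one_sub_X_pow_pos c 4 h0 (by simpa using hc)
end
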